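/- arXiv:2412.02291 — 2 statements merged into one kernel-verified Lean document; each statement's English description precedes it below -/
import Mathlib

section
/- Let y_{k+1,i} = β₂ y_{k,i} + (1−β₂) g_{k,i}² with 0 < β₂ < 1 and y_{k,i} ≥ 0, and let 0 < ζ ≤ 1, δ > 0. Then for any g_{k,i} ∈ ℝ, the quantity T₁ = g_{k,i}/√(δ² y_{k+1,i} + ζ) − g_{k,i}/√(δ² β₂ y_{k,i} + ζ) satisfies T₁ ≤ δ√(1−β₂) g_{k,i}² / √(ζ(δ² β₂ y_{k,i} + ζ)). -/
lemma rad_T1_aux (a b ζ c g : ℝ) (hζ0 : 0 < ζ) (hζa : ζ ≤ a) (hab : a ≤ b)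
    (hc0 : 0 ≤ c) (hc2 : c ^ 2 = b - a) :
    g / Real.sqrt b - g / Real.sqrt a ≤ c * |g| / Real.sqrt (ζ * a) := by
  have ha : 0 < a := lt_of_lt_of_le hζ0 hζa
  have hb : 0 < b := lt_of_lt_of_le ha hab
  have hsa : 0 < Real.sqrt a := Real.sqrt_pos.mpr ha
  have hsb : 0 < Real.sqrt b := Real.sqrt_pos.mpr hb
  have hsz : 0 < Real.sqrt ζ := Real.sqrt_pos.mpr hζ0
  have hsa2 : Real.sqrt a ^ 2 = a := Real.sq_sqrt ha.le
  have hsb2 : Real.sqrt b ^ 2 = b := Real.sq_sqrt hb.le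
  have hsab : Real.sqrt a ≤ Real.sqrt b := Real.sqrt_le_sqrt hab
  have hszsa : Real.sqrt ζ ≤ Real.sqrt a := Real.sqrt_le_sqrt hζa
  have hszsb : Real.sqrt ζ ≤ Real.sqrt b := le_trans hszsa hsab
  have hcsb : c ≤ Real.sqrt b := by nlinarith [sq_nonneg (Real.sqrt b - c)]
  have h1 : g / Real.sqrt b - g / Real.sqrt a
      = g * (Real.sqrt a - Real.sqrt b) / (Real.sqrt a * Real.sqrt b) := by
    field_simp
  have h2 : g * (Real.sqrt a - Real.sqrt b) ≤ |g| * (Real.sqrt b - Real.sqrt a) := by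
    calc g * (Real.sqrt a - Real.sqrt b) ≤ |g * (Real.sqrt a - Real.sqrt b)| := le_abs_self _
      _ = |g| * |Real.sqrt a - Real.sqrt b| := abs_mul _ _
      _ = |g| * (Real.sqrt b - Real.sqrt a) := by
          rw [abs_sub_comm, abs_of_nonneg (sub_nonneg.mpr hsab)]
  have h3 : |g| * (Real.sqrt b - Real.sqrt a) ≤ c * |g| := by
    have key : Real.sqrt b * (|g| * (Real.sqrt b - Real.sqrt a))
        ≤ Real.sqrt b * (c * |g|) := by
      have h4 : (Real.sqrt b - Real.sqrt a) * (Real.sqrt b + Real.sqrt a) = c ^ 2 := by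
        nlinarith
      have h5 : (Real.sqrt b - Real.sqrt a) * Real.sqrt b ≤ c ^ 2 := by nlinarith
      nlinarith [abs_nonneg g, mul_nonneg (abs_nonneg g) (sub_nonneg.mpr hcsb),
        mul_nonneg (mul_nonneg (abs_nonneg g) hc0) (sub_nonneg.mpr hcsb)]
    exact le_of_mul_le_mul_left key hsb
  have hmain : g / Real.sqrt b - g / Real.sqrt a
      ≤ c * |g| / (Real.sqrt a * Real.sqrt b) := by
    rw [h1]
    exact div_le_div_of_nonneg_right (le_trans h2 h3) (by positivity) |>.trans_eq rfl
  refine hmain.trans ?_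
  rw [Real.sqrt_mul hζ0.le a]
  apply div_le_div_of_nonneg_left (by positivity) (by positivity)
  calc Real.sqrt ζ * Real.sqrt a ≤ Real.sqrt b * Real.sqrt a :=
        mul_le_mul_of_nonneg_right hszsb hsa.le
    _ = Real.sqrt a * Real.sqrt b := mul_comm _ _

/-- Bound on the change of the preconditioned gradient after one exponential-moving-average
update of the second-order momentum: with `y' = β₂ y + (1−β₂) g²`,
`g/√(δ² y' + ζ) − g/√(δ² β₂ y + ζ) ≤ δ√(1−β₂) g² / √(ζ(δ² β₂ y + ζ))`. -/
theorem rad_T1_bound (β₂ y ζ δ g : ℝ)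
    (hβ₂ : 0 < β₂ ∧ β₂ < 1) (hy : 0 ≤ y) (hζ : 0 < ζ ∧ ζ ≤ 1) (hδ : 0 < δ) :
    g / Real.sqrt (δ ^ 2 * (β₂ * y + (1 - β₂) * g ^ 2) + ζ) -
        g / Real.sqrt (δ ^ 2 * β₂ * y + ζ) ≤
      δ * Real.sqrt (1 - β₂) * g ^ 2 / Real.sqrt (ζ * (δ ^ 2 * β₂ * y + ζ)) := by
  obtain ⟨hβ0, hβ1⟩ := hβ₂
  obtain ⟨hζ0, hζ1⟩ := hζ
  have hβ' : (0:ℝ) ≤ 1 - β₂ := by linarith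
  have hs12 : Real.sqrt (1 - β₂) ^ 2 = 1 - β₂ := Real.sq_sqrt hβ'
  have h := rad_T1_aux (δ ^ 2 * β₂ * y + ζ) (δ ^ 2 * (β₂ * y + (1 - β₂) * g ^ 2) + ζ)
    ζ (δ * Real.sqrt (1 - β₂) * |g|) g hζ0
    (by nlinarith [mul_nonneg (mul_nonneg (sq_nonneg δ) hβ0.le) hy])
    (by nlinarith [mul_nonneg (mul_nonneg (sq_nonneg δ) hβ') (sq_nonneg g)])
    (by positivity)
    (by rw [mul_pow, mul_pow, hs12, sq_abs]; ring)
  refine h.trans_eq ?_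
  congr 1
  rw [mul_assoc, abs_mul_abs_self]; ring
end

section
/- The change of variables v_k = −((1−e^{−rh})/h) p_k, α = h²/(m(1−e^{−rh})), β₁ = e^{−rh} transforms the conformal symplectic Euler update p_{k+1} = e^{−rh} p_k − h∇J(θ_k), θ_{k+1} = θ_k + (h/m) p_{k+1} exactly into the heavy-ball update v_{k+1} = β₁ v_k + (1−β₁)∇J(θ_k), θ_{k+1} = θ_k − α v_{k+1}, for any h > 0, r > 0, m > 0. -/
/-- The change of variables `v_k = −((1−e^{−rh})/h) p_k`, `α = h²/(m(1−e^{−rh}))`,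
`β₁ = e^{−rh}` transforms the conformal symplectic Euler update
`p_{k+1} = e^{−rh} p_k − h ∇J(θ_k)`, `θ_{k+1} = θ_k + (h/m) p_{k+1}` exactly into the
heavy-ball update `v_{k+1} = β₁ v_k + (1−β₁) ∇J(θ_k)`, `θ_{k+1} = θ_k − α v_{k+1}`. -/
theorem symplectic_euler_is_heavy_ball {n : ℕ} (h r m : ℝ)
    (hh : 0 < h) (hr : 0 < r) (hm : 0 < m)
    (gradJ : EuclideanSpace ℝ (Fin n) → EuclideanSpace ℝ (Fin n))
    (p θ v : ℕ → EuclideanSpace ℝ (Fin n))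
    (hprec : ∀ k, p (k + 1) = Real.exp (-r * h) • p k - h • gradJ (θ k))
    (hθrec : ∀ k, θ (k + 1) = θ k + (h / m) • p (k + 1))
    (hv : ∀ k, v k = -((1 - Real.exp (-r * h)) / h) • p k)
    (α β₁ : ℝ)
    (hα : α = h ^ 2 / (m * (1 - Real.exp (-r * h))))
    (hβ₁ : β₁ = Real.exp (-r * h)) :
    ∀ k, v (k + 1) = β₁ • v k + (1 - β₁) • gradJ (θ k) ∧
      θ (k + 1) = θ k - α • v (k + 1) := by
  subst hβ₁
  intro k
  set b := Real.exp (-r * h) with hb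
  have hblt : b < 1 := by
    rw [hb]
    have : -r * h < 0 := by nlinarith
    simpa using Real.exp_lt_one_iff.mpr this
  have h1β : (1 : ℝ) - b ≠ 0 := by linarith
  have hhne : h ≠ 0 := ne_of_gt hh
  have hmne : m ≠ 0 := ne_of_gt hm
  constructor
  · rw [hv (k + 1), hprec k, hv k, smul_sub, smul_smul, smul_smul, smul_smul]
    have e1 : -((1 - b) / h) * b = b * -((1 - b) / h) := by ring
    have e2 : -((1 - b) / h) * h = -(1 - b) := by field_simp
    rw [e1, e2, neg_smul, sub_neg_eq_add]
  · rw [hθrec k, hv (k + 1), smul_smul]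
    have e3 : α * -((1 - b) / h) = -(h / m) := by
      rw [hα]; field_simp
    rw [e3, neg_smul, sub_neg_eq_add]
end
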